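/- For every formal power series F ∈ ℚ[[p_1,p_2,…]], every integer d ≥ 1, and every partition α of d, the coefficient of the monomial p_α = ∏_{i} p_{α_i} in F equals the coefficient of the monomial q_α = ∏_{i} q_{α_i} in (1−η)·Φ(F)·(1−γ)^{−(2d+1)}, where (1−γ)^{−1} is the multiplicative inverse of the unit 1−γ in ℚ[[q_1,q_2,…]]. -/

import Mathlib

open scoped BigOperators

/-- The number of monotone transitive factorizations of a permutation of cycle type
`parts` (a partition, given as a multiset of parts) into
`r = 2g - 2 + ℓ + d` transpositions, i.e. the monotone single Hurwitz number. -/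
noncomputable def monoH (g : ℕ) (parts : Multiset ℕ) : ℕ :=
  Nat.card {T : Equiv.Perm (Fin parts.sum) ×
      (Fin (2 * g + Multiset.card parts + parts.sum - 2) → Equiv.Perm (Fin parts.sum)) //
    T.1.cycleType = parts.filter (fun x => 2 ≤ x) ∧
    (∀ i, (T.2 i).IsSwap) ∧
    T.1 * (List.ofFn T.2).prod = 1 ∧
    (∀ x y, ∃ π ∈ Subgroup.closure ({T.1} ∪ Set.range T.2), π x = y) ∧
    ∃ a b : Fin (2 * g + Multiset.card parts + parts.sum - 2) → Fin parts.sum,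
      (∀ i, a i < b i ∧ T.2 i = Equiv.swap (a i) (b i)) ∧ Monotone b}

/-- `|Aut α| = ∏ₖ mₖ!` where `mₖ` is the number of parts equal to `k`. -/
noncomputable def autQ (s : Multiset ℕ) : ℚ :=
  (s.dedup.map fun k => (Nat.factorial (s.count k) : ℚ)).prod

/-- Rising factorial `a (a+1) ⋯ (a+k-1)`. -/
noncomputable def riseN (a : ℚ) (k : ℕ) : ℚ := ∏ i ∈ Finset.range k, (a + i)

/-- Rising factorial with integer exponent, with the convention
`a^{↑k} = 1/((a+k)^{↑(-k)})` for `k < 0`. -/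
noncomputable def riseZ (a : ℚ) (k : ℤ) : ℚ :=
  if 0 ≤ k then ∏ i ∈ Finset.range k.toNat, (a + i)
  else 1 / ∏ i ∈ Finset.range (-k).toNat, (a + (k : ℚ) + i)

/-- The genus `g` generating function `H⃗_g = ∑_{d ≥ 1} ∑_{α ⊢ d} H⃗_g(α) p_α / d!`, as a formal
power series in variables indexed by `ℕ` (the variable of index `j ≥ 1` is `p_j`; index `0` is
unused). The coefficient of the monomial `p_α` is `H⃗_g(α)/d!`. -/
noncomputable def Hgen (g : ℕ) : MvPowerSeries ℕ ℚ := fun m =>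
  if m 0 = 0 ∧ m ≠ 0 then
    (monoH g (Finsupp.toMultiset m) : ℚ) / (Nat.factorial (Finsupp.toMultiset m).sum : ℚ)
  else 0

/-- The series `∑_{k ≥ 1} c k · q_k`, linear in the variables. -/
noncomputable def linS (c : ℕ → ℚ) : MvPowerSeries ℕ ℚ := fun m =>
  ∑ k ∈ m.support, if m = Finsupp.single k 1 then c k else 0

/-- `γ = ∑_{k ≥ 1} C(2k,k) q_k`. -/
noncomputable def gammaS : MvPowerSeries ℕ ℚ :=
  linS fun k => if k = 0 then 0 else (Nat.choose (2 * k) k : ℚ)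

/-- `η = ∑_{k ≥ 1} (2k+1) C(2k,k) q_k`. -/
noncomputable def etaS : MvPowerSeries ℕ ℚ :=
  linS fun k => if k = 0 then 0 else ((2 * k + 1) * Nat.choose (2 * k) k : ℚ)

/-- `η_j = ∑_{k ≥ 1} (2k+1) k^j C(2k,k) q_k`. -/
noncomputable def etaJ (j : ℕ) : MvPowerSeries ℕ ℚ :=
  linS fun k => if k = 0 then 0 else ((2 * k + 1) * k ^ j * Nat.choose (2 * k) k : ℚ)

/-- The substitution sending the variable of index `j` to `q_j (1-γ)^{2 w j}`; the coefficient
of a monomial `μ` in the image is a (finite) sum over the monomials `m ≤ μ` of the source. -/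
noncomputable def subW (w : ℕ → ℕ) (F : MvPowerSeries ℕ ℚ) : MvPowerSeries ℕ ℚ := fun μ =>
  ∑ m ∈ Finset.Iic μ, (MvPowerSeries.coeff m F) *
    MvPowerSeries.coeff μ
      (MvPowerSeries.monomial m 1 * (1 - gammaS) ^ (2 * m.sum fun j n => w j * n))

/-- The substitution homomorphism `Φ` sending `p_j ↦ q_j (1-γ)^{2j}` for `j ≥ 1`. -/
noncomputable def Phi : MvPowerSeries ℕ ℚ → MvPowerSeries ℕ ℚ := subW id

/-- The substitution homomorphism `Φ'` sending `p_j ↦ q_j (1-γ)^{2j}` for `j ≥ 1` and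
`x_1 ↦ y_1 (1-γ)^2`, where `x_1` (resp. `y_1`) is the variable of index `0` of the source
(resp. target). -/
noncomputable def Phi' : MvPowerSeries ℕ ℚ → MvPowerSeries ℕ ℚ := subW (fun j => max j 1)

/-- Substitution of a series with zero constant term into `L(X) = ∑_{k ≥ 1} X^k / k
= log (1/(1-X))`. -/
noncomputable def Lsub (a : MvPowerSeries ℕ ℚ) : MvPowerSeries ℕ ℚ := fun μ =>
  ∑ k ∈ Finset.Icc 1 (μ.sum fun _ n => n), (1 / (k : ℚ)) * MvPowerSeries.coeff μ (a ^ k)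

/-- The operator `Δ₁ F = ∑_{k ≥ 1} k x₁^k ∂F/∂p_k`, where `x₁` is the variable of index `0`
and `p_k` the variable of index `k ≥ 1`. -/
noncomputable def Del (F : MvPowerSeries ℕ ℚ) : MvPowerSeries ℕ ℚ := fun μ =>
  ∑ k ∈ Finset.Icc 1 (μ 0),
    (k : ℚ) * ((μ k : ℚ) + 1) *
      MvPowerSeries.coeff (μ - Finsupp.single 0 k + Finsupp.single k 1) F

/-- `σ(y₁) = ∑_{k ≥ 0} C(2k,k) y₁^k`, a series in the single variable `y₁` of index `0`. -/
noncomputable def sigmaS : MvPowerSeries ℕ ℚ := fun μ =>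
  if μ.support ⊆ {0} then (Nat.choose (2 * μ 0) (μ 0) : ℚ) else 0

/-! Write `v = (1 - γ)⁻¹` and `|ν| = ∑ k ν_k` for the weight of a monomial `q^ν`. The coefficient
of `q_α` in `(1 - η) Φ(F) v^{2d+1}` is `∑_{m ≤ α} F_m [q^{α-m}] (1 - η) v^{2|α-m|+1}`.
Let `W` be the Euler derivation `q^ν ↦ |ν| q^ν`. Since `η = 2 W γ + γ` and `γ v = v - 1`,
`s (1 - η) v^{2s+1} = (s - W) v^{2s}`, whose coefficient at every monomial of weight `s` vanishes;
as the parts of `α` are positive, `α - m` has positive weight unless `m = α`. -/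

open MvPowerSeries Finsupp

namespace MvPowerSeries

variable {σ R : Type*} [CommRing R]

noncomputable def weightedEuler (φ : (σ →₀ ℕ) →+ R) :
    Derivation R (MvPowerSeries σ R) (MvPowerSeries σ R) :=
  Derivation.mk'
    { toFun f := (fun ν => φ ν * coeff ν f : MvPowerSeries σ R)
      map_add' f g := by ext ν; exact mul_add _ _ _
      map_smul' r f := by ext ν; exact mul_left_comm _ _ _ }
    fun f g => by
      classical
      ext ν
      change φ ν * coeff ν (f * g) = coeff ν (f * _ + g * _)
      rw [mul_comm g, map_add, coeff_mul, coeff_mul, coeff_mul, Finset.mul_sum,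
        ← Finset.sum_add_distrib]
      refine Finset.sum_congr rfl fun p hp => ?_
      rw [← Finset.HasAntidiagonal.mem_antidiagonal.mp hp, map_add]
      change _ = coeff p.1 f * (φ p.2 * coeff p.2 g) + (φ p.1 * coeff p.1 f) * coeff p.2 g
      ring

@[simp]
theorem coeff_weightedEuler (φ : (σ →₀ ℕ) →+ R) (f : MvPowerSeries σ R) (ν : σ →₀ ℕ) :
    coeff ν (weightedEuler φ f) = φ ν * coeff ν f :=
  rfl

end MvPowerSeries

namespace Derivation

variable {R A : Type*} [CommRing R] [CommRing A] [Algebra R A] (D : Derivation R A A)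
  {γ v : A}

theorem apply_pow_of_one_sub_mul_eq_one (h : (1 - γ) * v = 1) (n : ℕ) :
    D (v ^ n) = n * v ^ (n + 1) * D γ := by
  have hv : D v = v ^ 2 * D γ := by
    rw [D.leibniz_of_mul_eq_one (mul_comm (1 - γ) v ▸ h), D.map_sub, map_one_eq_zero,
      smul_eq_mul]
    ring
  rw [D.leibniz_pow, hv, nsmul_eq_mul, smul_eq_mul]
  rcases n with _ | n
  · simp
  · simp only [Nat.add_sub_cancel]; push_cast; ring

theorem nsmul_one_sub_mul_pow (h : (1 - γ) * v = 1) (s : ℕ) :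
    s • ((1 - (2 • D γ + γ)) * v ^ (2 * s + 1)) = s • v ^ (2 * s) - D (v ^ (2 * s)) := by
  rw [D.apply_pow_of_one_sub_mul_eq_one h, nsmul_eq_mul, nsmul_eq_mul]
  push_cast
  linear_combination (s * v ^ (2 * s)) * h

end Derivation

theorem Multiset.weight_id_toFinsupp (s : Multiset ℕ) :
    weight id (Multiset.toFinsupp s) = s.sum := by
  simp [weight_apply, Finsupp.sum, Multiset.toFinsupp_support, Finset.sum_multiset_count]

theorem Nat.Partition.toFinsupp_parts_zero {d : ℕ} (α : Nat.Partition d) :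
    Multiset.toFinsupp α.parts 0 = 0 := by
  rw [Multiset.toFinsupp_apply, Multiset.count_eq_zero]
  exact fun h => (α.parts_pos h).false

theorem linS_apply_single (c : ℕ → ℚ) (k : ℕ) : linS c (single k 1) = c k := by
  simp [linS]

theorem linS_apply_of_ne (c : ℕ → ℚ) {ν : ℕ →₀ ℕ} (h : ∀ k, ν ≠ single k 1) : linS c ν = 0 :=
  Finset.sum_eq_zero fun k _ => if_neg (h k)

theorem constantCoeff_linS (c : ℕ → ℚ) : constantCoeff (linS c) = 0 := by
  rw [← coeff_zero_eq_constantCoeff_apply]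
  simp [coeff_apply, linS]

theorem etaS_eq :
    etaS = 2 • weightedEuler ((Nat.castAddMonoidHom ℚ).comp (weight id)) gammaS + gammaS := by
  ext ν
  rw [map_add, map_nsmul, coeff_weightedEuler]
  change linS _ ν = 2 • (_ * linS _ ν) + linS _ ν
  by_cases h : ∃ k, ν = single k 1
  · obtain ⟨k, rfl⟩ := h
    simp only [linS_apply_single, AddMonoidHom.comp_apply, weight_single]
    split_ifs <;> simp; ring
  · push Not at h
    simp [linS_apply_of_ne _ h]

theorem one_sub_gammaS_mul_inv : (1 - gammaS) * (1 - gammaS)⁻¹ = 1 :=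
  MvPowerSeries.mul_inv_cancel _ (by simp [gammaS, constantCoeff_linS])

theorem coeff_one_sub_etaS_mul_inv_pow {ν : ℕ →₀ ℕ} (hν : ν 0 = 0) :
    coeff ν ((1 - etaS) * (1 - gammaS)⁻¹ ^ (2 * weight id ν + 1)) =
      if ν = 0 then 1 else 0 := by
  split_ifs with h0
  · subst h0
    simp [constantCoeff_inv, etaS, gammaS, constantCoeff_linS]
  · obtain ⟨k, hk⟩ : ∃ k, ν k ≠ 0 := by simpa [Finsupp.ext_iff] using h0
    have hk0 : k ≠ 0 := by rintro rfl; exact hk hν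
    have hs : weight id ν ≠ 0 :=
      ((Nat.pos_of_ne_zero hk0).trans_le (le_weight_of_ne_zero' id hk)).ne'
    have key := congrArg (coeff ν) <|
      (weightedEuler ((Nat.castAddMonoidHom ℚ).comp (weight id))).nsmul_one_sub_mul_pow
        one_sub_gammaS_mul_inv (weight id ν)
    rw [← etaS_eq, map_nsmul, map_sub, map_nsmul, coeff_weightedEuler] at key
    simpa [hs] using key

theorem coeff_subW_mul (w : ℕ → ℕ) (F G : MvPowerSeries ℕ ℚ) (μ : ℕ →₀ ℕ) :
    coeff μ (subW w F * G) = ∑ m ∈ Finset.Iic μ, coeff m F *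
      coeff μ (monomial m 1 * (1 - gammaS) ^ (2 * m.sum fun j n => w j * n) * G) := by
  classical
  set M : (ℕ →₀ ℕ) → MvPowerSeries ℕ ℚ :=
    fun m => monomial m 1 * (1 - gammaS) ^ (2 * m.sum fun j n => w j * n)
  have hterm : ∀ p ∈ Finset.HasAntidiagonal.antidiagonal μ,
      coeff p.1 (subW w F) * coeff p.2 G =
        ∑ m ∈ Finset.Iic μ, coeff m F * (coeff p.1 (M m) * coeff p.2 G) := by
    intro p hp
    have hle : p.1 ≤ μ := Finset.HasAntidiagonal.mem_antidiagonal.mp hp ▸ le_self_add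
    rw [← Finset.sum_subset (Finset.Iic_subset_Iic.mpr hle)]
    · simp_rw [← mul_assoc]
      exact Finset.sum_mul _ _ _
    · intro m _ hm
      rw [coeff_monomial_mul, if_neg (fun h => hm (Finset.mem_Iic.mpr h)), zero_mul, mul_zero]
  rw [coeff_mul, Finset.sum_congr rfl hterm, Finset.sum_comm]
  simp_rw [← Finset.mul_sum, ← coeff_mul, M]

theorem coeff_monomial_mul_one_sub_gammaS_pow_mul {m μ : ℕ →₀ ℕ} {d : ℕ} (hm : m ≤ μ)
    (hμ0 : μ 0 = 0) (hμd : weight id μ = d) :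
    coeff μ (monomial m 1 * (1 - gammaS) ^ (2 * m.sum fun j n => id j * n) *
      ((1 - etaS) * (1 - gammaS)⁻¹ ^ (2 * d + 1))) = if m = μ then 1 else 0 := by
  have hsum : (m.sum fun j n => id j * n) = weight id m := by simp [weight_apply, mul_comm]
  have hd : d = weight id m + weight id (μ - m) := by
    rw [← hμd, ← map_add, add_tsub_cancel_of_le hm]
  have hpow : (1 - gammaS) ^ (2 * weight id m) * (1 - gammaS)⁻¹ ^ (2 * weight id m) = 1 := by
    rw [← mul_pow, one_sub_gammaS_mul_inv, one_pow]
  have hcancel :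
      (1 - gammaS) ^ (2 * weight id m) * ((1 - etaS) * (1 - gammaS)⁻¹ ^ (2 * d + 1)) =
        (1 - etaS) * (1 - gammaS)⁻¹ ^ (2 * weight id (μ - m) + 1) := by
    rw [hd]
    linear_combination ((1 - etaS) * (1 - gammaS)⁻¹ ^ (2 * weight id (μ - m) + 1)) * hpow
  rw [hsum, mul_assoc, hcancel, coeff_monomial_mul, if_pos hm, one_mul,
    coeff_one_sub_etaS_mul_inv_pow (by simp [hμ0])]
  exact if_congr (tsub_eq_zero_iff_le.trans ⟨hm.antisymm, fun h => h ▸ le_rfl⟩) rfl rfl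

theorem coeff_p_eq_coeff_q_general (F : MvPowerSeries ℕ ℚ) (d : ℕ)
    (α : Nat.Partition d) :
    MvPowerSeries.coeff (Multiset.toFinsupp α.parts) F =
      MvPowerSeries.coeff (Multiset.toFinsupp α.parts)
        ((1 - etaS) * Phi F * ((1 - gammaS)⁻¹) ^ (2 * d + 1)) := by
  have hweight : weight id (Multiset.toFinsupp α.parts) = d := by
    rw [Multiset.weight_id_toFinsupp, α.parts_sum]
  rw [mul_right_comm, mul_comm, Phi, coeff_subW_mul]
  rw [Finset.sum_congr rfl fun m hm => by
    rw [coeff_monomial_mul_one_sub_gammaS_pow_mul (Finset.mem_Iic.mp hm)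
      α.toFinsupp_parts_zero hweight]]
  simp

/-- Lagrange inversion: extraction of the coefficient of `p_α` via the coefficient of `q_α`. -/
theorem coeff_p_eq_coeff_q (F : MvPowerSeries ℕ ℚ) (d : ℕ) (hd : 1 ≤ d)
    (α : Nat.Partition d) :
    MvPowerSeries.coeff (Multiset.toFinsupp α.parts) F =
      MvPowerSeries.coeff (Multiset.toFinsupp α.parts)
        ((1 - etaS) * Phi F * ((1 - gammaS)⁻¹) ^ (2 * d + 1)) :=
  coeff_p_eq_coeff_q_general F d α
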